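/- Let p be an odd prime, R = F_p[u]/(u^2), and θ a nontrivial automorphism of R. The group of units of the skew polynomial ring R[x;θ] is exactly { a + u·h(x) : a ∈ F_p*, h(x) ∈ F_p[x] }. -/

import Mathlib

open TrivSqZeroExt

theorem RingAut.one_apply' {R : Type*} [Ring R] (b : R) : (1 : RingAut R) b = b := rfl

/-- The skew polynomial ring `R[x;θ]`, as finitely supported coefficient
sequences with multiplication twisted by the ring automorphism `θ`:
`(a x^i) * (b x^j) = a θ^i(b) x^{i+j}`. -/
def SkewPoly (R : Type*) [Ring R] (θ : RingAut R) : Type _ := ℕ →₀ R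

namespace SkewPoly

variable {R : Type*} [Ring R] (θ : RingAut R)

/-- The skew-twisted convolution product. -/
noncomputable def mulAux (f g : ℕ →₀ R) : ℕ →₀ R :=
  f.sum fun i a => g.sum fun j b => Finsupp.single (i + j) (a * (θ ^ i) b)

theorem mulAux_zero_left (g : ℕ →₀ R) : mulAux θ 0 g = 0 := Finsupp.sum_zero_index

theorem mulAux_zero_right (f : ℕ →₀ R) : mulAux θ f 0 = 0 := by
  simp [mulAux, Finsupp.sum_zero_index]

theorem mulAux_add_left (f f' g : ℕ →₀ R) :
    mulAux θ (f + f') g = mulAux θ f g + mulAux θ f' g := by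
  unfold mulAux
  apply Finsupp.sum_add_index' <;> intros <;> simp [add_mul, Finsupp.single_add, Finsupp.sum_add]

theorem mulAux_add_right (f g g' : ℕ →₀ R) :
    mulAux θ f (g + g') = mulAux θ f g + mulAux θ f g' := by
  unfold mulAux
  rw [← Finsupp.sum_add]
  apply Finsupp.sum_congr
  intro i _
  apply Finsupp.sum_add_index' <;> intros <;> simp [mul_add, Finsupp.single_add]

theorem one_mulAux (g : ℕ →₀ R) : mulAux θ (Finsupp.single 0 1) g = g := by
  unfold mulAux
  rw [Finsupp.sum_single_index]
  · simp [RingAut.one_apply', Finsupp.sum_single]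
  · simp

theorem mulAux_one (f : ℕ →₀ R) : mulAux θ f (Finsupp.single 0 1) = f := by
  unfold mulAux
  have : ∀ i ∈ f.support, ((Finsupp.single 0 1 : ℕ →₀ R).sum fun j b =>
      Finsupp.single (i + j) (f i * (θ ^ i) b)) = Finsupp.single i (f i) := by
    intro i _
    rw [Finsupp.sum_single_index] <;> simp
  rw [Finsupp.sum_congr this, Finsupp.sum_single f]

theorem mulAux_single_single (i j : ℕ) (a b : R) :
    mulAux θ (Finsupp.single i a) (Finsupp.single j b) =
      Finsupp.single (i + j) (a * (θ ^ i) b) := by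
  unfold mulAux
  rw [Finsupp.sum_single_index, Finsupp.sum_single_index]
  · simp
  · rw [Finsupp.sum_single_index] <;> simp

theorem mulAux_assoc (f g h : ℕ →₀ R) :
    mulAux θ (mulAux θ f g) h = mulAux θ f (mulAux θ g h) := by
  induction f using Finsupp.induction_linear with
  | zero => simp [mulAux_zero_left]
  | add f f' hf hf' => simp [mulAux_add_left, hf, hf']
  | single i a =>
    induction g using Finsupp.induction_linear with
    | zero => simp [mulAux_zero_left, mulAux_zero_right]
    | add g g' hg hg' => simp [mulAux_add_left, mulAux_add_right, hg, hg']
    | single j b =>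
      induction h using Finsupp.induction_linear with
      | zero => simp [mulAux_zero_right]
      | add h h' hh hh' => simp [mulAux_add_right, hh, hh']
      | single k c =>
        rw [mulAux_single_single, mulAux_single_single, mulAux_single_single,
          mulAux_single_single]
        rw [add_assoc, mul_assoc, map_mul, pow_add]
        rfl

variable {θ}

noncomputable instance : AddCommGroup (SkewPoly R θ) := inferInstanceAs (AddCommGroup (ℕ →₀ R))

/-- Reinterpret a skew polynomial as a finitely supported function. -/
def toFinsupp (f : SkewPoly R θ) : ℕ →₀ R := f

/-- Build a skew polynomial out of a finitely supported function. -/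
def ofFinsupp (f : ℕ →₀ R) : SkewPoly R θ := f

noncomputable instance : Ring (SkewPoly R θ) where
  __ := (inferInstanceAs (AddCommGroup (ℕ →₀ R)) : AddCommGroup (ℕ →₀ R))
  mul f g := mulAux θ (toFinsupp f) (toFinsupp g)
  one := Finsupp.single 0 1
  left_distrib f g h := mulAux_add_right θ (toFinsupp f) (toFinsupp g) (toFinsupp h)
  right_distrib f g h := mulAux_add_left θ (toFinsupp f) (toFinsupp g) (toFinsupp h)
  zero_mul := mulAux_zero_left θ
  mul_zero := mulAux_zero_right θ
  mul_assoc := mulAux_assoc θ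
  one_mul := one_mulAux θ
  mul_one := mulAux_one θ

variable (θ) in
/-- The constant skew polynomial `a`. -/
noncomputable def C (a : R) : SkewPoly R θ := ofFinsupp (Finsupp.single 0 a)

variable (θ) in
/-- The variable `x` of the skew polynomial ring. -/
noncomputable def X : SkewPoly R θ := ofFinsupp (Finsupp.single 1 1)

/-- The `n`-th coefficient of a skew polynomial. -/
def coeff (f : SkewPoly R θ) (n : ℕ) : R := toFinsupp f n

/-- The degree of a skew polynomial (`⊥` for the zero polynomial). -/
def degree (f : SkewPoly R θ) : WithBot ℕ := (toFinsupp f).support.max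

/-- The degree of a skew polynomial as a natural number. -/
def natDegree (f : SkewPoly R θ) : ℕ := WithBot.unbotD 0 (degree f)

/-- The leading coefficient of a skew polynomial. -/
def leadingCoeff (f : SkewPoly R θ) : R := coeff f (natDegree f)

/-- A skew polynomial is monic if its leading coefficient is `1`. -/
def Monic (f : SkewPoly R θ) : Prop := leadingCoeff f = 1

end SkewPoly

/-- The inclusion of `F_p[x]` into the skew polynomial ring
`(F_p + u F_p)[x;θ]` (coefficientwise `a ↦ a + u·0`); this is the natural
embedding of `F_p[x]` as a subring of `R[x;θ]` since `θ` fixes `F_p`. -/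
noncomputable def SkewPoly.ofPoly {p : ℕ}
    (θ : RingAut (DualNumber (ZMod p))) (f : Polynomial (ZMod p)) :
    SkewPoly (DualNumber (ZMod p)) θ :=
  SkewPoly.ofFinsupp
    (Finsupp.mapRange (inl : ZMod p → DualNumber (ZMod p)) (inl_zero (ZMod p)) f.toFinsupp.coeff)

/-- Reduction of a skew polynomial over `F_p + u F_p` modulo `u`, i.e. the
polynomial in `F_p[x]` whose coefficients are the first components of the
coefficients. -/
noncomputable def SkewPoly.fstPoly {p : ℕ}
    {θ : RingAut (DualNumber (ZMod p))} (f : SkewPoly (DualNumber (ZMod p)) θ) :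
    Polynomial (ZMod p) :=
  Polynomial.ofFinsupp (AddMonoidAlgebra.ofCoeff
    (Finsupp.mapRange TrivSqZeroExt.fst fst_zero (SkewPoly.toFinsupp f)))

/-
Reduction modulo `u` is a ring homomorphism `R[x;θ] → F_p[x]`: every automorphism of `R` fixes
`F_p` and sends the nilpotent `u` to a nilpotent, so it induces the identity on `R/(u) = F_p`.
A unit of `R[x;θ]` therefore reduces to a unit of `F_p[x]`, a nonzero constant `a`, and so has
the form `a + u·h(x)`. Conversely, the kernel of the reduction squares to zero, so `a + u·h(x)`
is a unit times `1 + (nilpotent)`.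
-/

namespace SkewPoly

variable {R : Type*} [Ring R] {θ : RingAut R}

theorem ext {f g : SkewPoly R θ} (h : ∀ n, f.coeff n = g.coeff n) : f = g :=
  Finsupp.ext h

theorem coeff_add (f g : SkewPoly R θ) (n : ℕ) : (f + g).coeff n = f.coeff n + g.coeff n :=
  rfl

theorem ofFinsupp_single_mul_single (i j : ℕ) (a b : R) :
    (ofFinsupp (Finsupp.single i a) * ofFinsupp (Finsupp.single j b) : SkewPoly R θ) =
      ofFinsupp (Finsupp.single (i + j) (a * (θ ^ i) b)) :=
  mulAux_single_single θ i j a b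

@[elab_as_elim]
theorem induction_linear {motive : SkewPoly R θ → Prop} (f : SkewPoly R θ) (zero : motive 0)
    (add : ∀ f g, motive f → motive g → motive (f + g))
    (single : ∀ i a, motive (ofFinsupp (Finsupp.single i a))) : motive f :=
  Finsupp.induction_linear (motive := motive) f zero add single

theorem C_mul_C (r s : R) : C θ r * C θ s = C θ (r * s) := by
  rw [C, C, ofFinsupp_single_mul_single, pow_zero, RingAut.one_apply']
  rfl

theorem isUnit_C {r : R} (hr : IsUnit r) : IsUnit (C θ r) := by
  obtain ⟨u, rfl⟩ := hr
  exact ⟨⟨C θ u, C θ ↑u⁻¹, by rw [C_mul_C, u.mul_inv]; rfl, by rw [C_mul_C, u.inv_mul]; rfl⟩, rfl⟩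

theorem coeff_C_mul (r : R) (f : SkewPoly R θ) (n : ℕ) : (C θ r * f).coeff n = r * f.coeff n := by
  induction f using induction_linear with
  | zero => rw [mul_zero]; exact (mul_zero r).symm
  | add f g hf hg => rw [mul_add, coeff_add, coeff_add, hf, hg, mul_add]
  | single i a =>
    rw [C, ofFinsupp_single_mul_single, pow_zero, RingAut.one_apply', zero_add]
    change Finsupp.single i (r * a) n = r * Finsupp.single i a n
    rw [← Finsupp.smul_single', Finsupp.smul_apply, smul_eq_mul]

theorem mul_eq_zero_of_coeff {f g : SkewPoly R θ}
    (H : ∀ i j, f.coeff i * (θ ^ i) (g.coeff j) = 0) : f * g = 0 := by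
  refine Finset.sum_eq_zero fun i _ => Finset.sum_eq_zero fun j _ => ?_
  change Finsupp.single _ (f.coeff i * (θ ^ i) (g.coeff j)) = 0
  rw [H i j, Finsupp.single_zero]

end SkewPoly

theorem TrivSqZeroExt.mul_eq_zero_of_fst_eq_zero {R M : Type*} [Semiring R] [AddCommMonoid M]
    [Module R M] [Module Rᵐᵒᵖ M] {x y : TrivSqZeroExt R M} (hx : x.fst = 0) (hy : y.fst = 0) :
    x * y = 0 := by
  ext <;> simp [hx, hy]

open DualNumber in
theorem DualNumber.fst_ringAut_apply {p : ℕ} [Fact p.Prime] (θ : RingAut (DualNumber (ZMod p)))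
    (r : DualNumber (ZMod p)) : fst (θ r) = fst r := by
  have hε : fst (θ ε) = 0 := by
    rw [← pow_eq_zero_iff two_ne_zero, ← fst_pow, ← map_pow, eps_pow_two, map_zero, fst_zero]
  have key : (fstHom (ZMod p) (ZMod p) (ZMod p)).toRingHom.comp θ.toRingHom =
      (fstHom (ZMod p) (ZMod p) (ZMod p)).toRingHom :=
    DualNumber.ringHom_ext (Subsingleton.elim _ _) (by simpa using hε)
  exact RingHom.congr_fun key r

namespace SkewPoly

open DualNumber

variable {p : ℕ} {θ : RingAut (DualNumber (ZMod p))}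

noncomputable def sndPoly (f : SkewPoly (DualNumber (ZMod p)) θ) : Polynomial (ZMod p) :=
  Polynomial.ofFinsupp (AddMonoidAlgebra.ofCoeff
    (Finsupp.mapRange TrivSqZeroExt.snd snd_zero (toFinsupp f)))

theorem coeff_fstPoly (f : SkewPoly (DualNumber (ZMod p)) θ) (n : ℕ) :
    (fstPoly f).coeff n = fst (f.coeff n) := by
  rw [fstPoly, Polynomial.coeff_ofFinsupp, AddMonoidAlgebra.coeff_ofCoeff, Finsupp.mapRange_apply]
  rfl

theorem coeff_sndPoly (f : SkewPoly (DualNumber (ZMod p)) θ) (n : ℕ) :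
    (sndPoly f).coeff n = snd (f.coeff n) := by
  rw [sndPoly, Polynomial.coeff_ofFinsupp, AddMonoidAlgebra.coeff_ofCoeff, Finsupp.mapRange_apply]
  rfl

theorem coeff_ofPoly (h : Polynomial (ZMod p)) (n : ℕ) :
    (ofPoly θ h).coeff n = inl (h.coeff n) :=
  Finsupp.mapRange_apply (hf := inl_zero (ZMod p))

theorem ofPoly_C (a : ZMod p) : ofPoly θ (Polynomial.C a) = C θ (inl a) := by
  refine ext fun n => ?_
  rw [coeff_ofPoly, Polynomial.coeff_C]
  rcases eq_or_ne n 0 with rfl | hn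
  · rw [if_pos rfl]
    exact Finsupp.single_eq_same.symm
  · rw [if_neg hn, inl_zero]
    exact (Finsupp.single_eq_of_ne' (Ne.symm hn)).symm

theorem eq_ofPoly_fstPoly_add_eps_mul (f : SkewPoly (DualNumber (ZMod p)) θ) :
    f = ofPoly θ (fstPoly f) + C θ ε * ofPoly θ (sndPoly f) := by
  refine ext fun n => ?_
  rw [coeff_add, coeff_C_mul, coeff_ofPoly, coeff_ofPoly, coeff_fstPoly, coeff_sndPoly,
    (commute_eps_left _).eq, inl_mul_eq_smul, ← inr_eq_smul_eps, inl_fst_add_inr_snd_eq]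

theorem fstPoly_zero : fstPoly (0 : SkewPoly (DualNumber (ZMod p)) θ) = 0 := by
  ext n
  rw [coeff_fstPoly]
  rfl

theorem fstPoly_add (f g : SkewPoly (DualNumber (ZMod p)) θ) :
    fstPoly (f + g) = fstPoly f + fstPoly g := by
  ext n
  simp only [Polynomial.coeff_add, coeff_fstPoly, coeff_add, fst_add]

theorem fstPoly_ofFinsupp_single (i : ℕ) (a : DualNumber (ZMod p)) :
    fstPoly (ofFinsupp (Finsupp.single i a) : SkewPoly _ θ) = Polynomial.monomial i (fst a) := by
  rw [fstPoly, ← Polynomial.ofFinsupp_single]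
  simp [toFinsupp, ofFinsupp]

theorem fstPoly_C (r : DualNumber (ZMod p)) : fstPoly (C θ r) = Polynomial.C (fst r) := by
  rw [C, fstPoly_ofFinsupp_single, Polynomial.monomial_zero_left]

theorem fstPoly_mul [Fact p.Prime] (f g : SkewPoly (DualNumber (ZMod p)) θ) :
    fstPoly (f * g) = fstPoly f * fstPoly g := by
  induction f using induction_linear with
  | zero => rw [zero_mul, fstPoly_zero, zero_mul]
  | add f f' hf hf' => rw [add_mul, fstPoly_add, fstPoly_add, hf, hf', add_mul]
  | single i a =>
    induction g using induction_linear with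
    | zero => rw [mul_zero, fstPoly_zero, mul_zero]
    | add g g' hg hg' => rw [mul_add, fstPoly_add, fstPoly_add, hg, hg', mul_add]
    | single j b =>
      rw [ofFinsupp_single_mul_single, fstPoly_ofFinsupp_single, fstPoly_ofFinsupp_single,
        fstPoly_ofFinsupp_single, Polynomial.monomial_mul_monomial, fst_mul, fst_ringAut_apply]

variable (θ) in
noncomputable def fstPolyHom [Fact p.Prime] :
    SkewPoly (DualNumber (ZMod p)) θ →+* Polynomial (ZMod p) where
  toFun := fstPoly
  map_zero' := fstPoly_zero
  map_add' := fstPoly_add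
  map_one' := (fstPoly_C 1).trans (by rw [fst_one, Polynomial.C_1])
  map_mul' := fstPoly_mul

theorem mul_eq_zero_of_fstPoly_eq_zero [Fact p.Prime] {f g : SkewPoly (DualNumber (ZMod p)) θ}
    (hf : fstPoly f = 0) (hg : fstPoly g = 0) : f * g = 0 := by
  refine mul_eq_zero_of_coeff fun i j => TrivSqZeroExt.mul_eq_zero_of_fst_eq_zero ?_ ?_
  · rw [← coeff_fstPoly, hf, Polynomial.coeff_zero]
  · rw [fst_ringAut_apply, ← coeff_fstPoly, hg, Polynomial.coeff_zero]

theorem isUnit_add_of_fstPoly_eq_zero [Fact p.Prime] {f m : SkewPoly (DualNumber (ZMod p)) θ}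
    (hf : IsUnit f) (hm : fstPoly m = 0) : IsUnit (f + m) := by
  obtain ⟨u, rfl⟩ := hf
  set n : SkewPoly (DualNumber (ZMod p)) θ := ↑u⁻¹ * m
  have hn : fstPoly n = 0 := by rw [fstPoly_mul, hm, mul_zero]
  have hnil : IsNilpotent n := ⟨2, by rw [pow_two, mul_eq_zero_of_fstPoly_eq_zero hn hn]⟩
  rw [show ↑u + m = ↑u * (1 + n) by rw [mul_add, mul_one, u.mul_inv_cancel_left]]
  exact u.isUnit.mul hnil.isUnit_one_add

end SkewPoly

open SkewPoly DualNumber in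
theorem skew_units_general (p : ℕ) (hp : p.Prime)
    (θ : RingAut (DualNumber (ZMod p)))
    (f : SkewPoly (DualNumber (ZMod p)) θ) :
    IsUnit f ↔
      ∃ a : ZMod p, a ≠ 0 ∧ ∃ h : Polynomial (ZMod p),
        f = SkewPoly.C θ (TrivSqZeroExt.inl a) + SkewPoly.C θ ε * SkewPoly.ofPoly θ h := by
  have : Fact p.Prime := ⟨hp⟩
  constructor
  · intro hf
    obtain ⟨a, ha, hfa⟩ := Polynomial.isUnit_iff.mp (hf.map (fstPolyHom θ))
    refine ⟨a, ha.ne_zero, sndPoly f, ?_⟩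
    rw [← ofPoly_C, hfa]
    exact eq_ofPoly_fstPoly_add_eps_mul f
  · rintro ⟨a, ha, h, rfl⟩
    refine isUnit_add_of_fstPoly_eq_zero (isUnit_C (isUnit_inl_iff.mpr ha.isUnit)) ?_
    rw [fstPoly_mul, fstPoly_C, fst_eps, Polynomial.C_0, zero_mul]

open SkewPoly DualNumber in
/-- For a nontrivial automorphism `θ` of `R = F_p[u]/(u²)`, the units of
`R[x;θ]` are exactly the elements `a + u·h(x)` with `a ∈ F_p*` and
`h(x) ∈ F_p[x]`. -/
theorem skew_units (p : ℕ) (hp : p.Prime) (hodd : p ≠ 2)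
    (θ : RingAut (DualNumber (ZMod p))) (hθ : θ ≠ 1)
    (f : SkewPoly (DualNumber (ZMod p)) θ) :
    IsUnit f ↔
      ∃ a : ZMod p, a ≠ 0 ∧ ∃ h : Polynomial (ZMod p),
        f = SkewPoly.C θ (TrivSqZeroExt.inl a) + SkewPoly.C θ ε * SkewPoly.ofPoly θ h :=
  skew_units_general p hp θ f
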